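/- Let |γ| < 1 and Γ ∈ ℝ, and define G_γ(w) = Γ(1−Γ)(w − 2 + w^{−1}) − (1/4)(w^γ − 2 + w^{−γ}) and F_γ(w) = (γ/4)((γ−1)w^{γ+1} + (γ+1)w^{1−γ}) − 2Γ(1−Γ) for w > 0. Then G_γ''(w) = −w^{−3} F_γ(w) for all w > 0, and F_γ(w) ≤ F_γ(1) for all 0 < w ≤ 1. -/

import Mathlib

/-!
Both claims are direct computations with the power functions `w ↦ w ^ p` on `w > 0`, whose
derivative is `p * w ^ (p - 1)`. For the second claim,
`F_γ'(w) = (γ / 4) (γ² - 1) (w ^ γ - w ^ (-γ))`, which is nonnegative on `(0, 1]` because both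
`γ² - 1` and `γ (w ^ γ - w ^ (-γ))` are nonpositive there; so `F_γ` increases up to `w = 1`.
-/

open Set Topology

noncomputable section

namespace Ggamma

def G (γ Γ w : ℝ) : ℝ :=
  Γ * (1 - Γ) * (w - 2 + w⁻¹) - (1 / 4) * (w ^ γ - 2 + w ^ (-γ))

def G' (γ Γ w : ℝ) : ℝ :=
  Γ * (1 - Γ) * (1 - w ^ (-2 : ℝ)) - γ / 4 * (w ^ (γ - 1) - w ^ (-γ - 1))

def F (γ Γ w : ℝ) : ℝ :=
  (γ / 4) * ((γ - 1) * w ^ (γ + 1) + (γ + 1) * w ^ (1 - γ)) - 2 * Γ * (1 - Γ)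

variable {γ Γ x : ℝ}

lemma hasDerivAt_rpow_of_pos (p : ℝ) (hx : 0 < x) :
    HasDerivAt (fun y : ℝ => y ^ p) (p * x ^ (p - 1)) x :=
  Real.hasDerivAt_rpow_const (Or.inl hx.ne')

lemma hasDerivAt_G (hx : 0 < x) : HasDerivAt (G γ Γ) (G' γ Γ x) x := by
  have hG : G γ Γ =
      fun w => Γ * (1 - Γ) * (w - 2 + w ^ (-1 : ℝ)) - 1 / 4 * (w ^ γ - 2 + w ^ (-γ)) := by
    simp only [Real.rpow_neg_one]; rfl
  rw [hG]
  refine ((((hasDerivAt_id x).sub_const 2).add (hasDerivAt_rpow_of_pos (-1) hx)).const_mul _ |>.sub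
    ((((hasDerivAt_rpow_of_pos γ hx).sub_const 2).add
      (hasDerivAt_rpow_of_pos (-γ) hx)).const_mul _)).congr_deriv ?_
  rw [G', show (-1 : ℝ) - 1 = -2 by norm_num]
  ring

lemma hasDerivAt_G' (hx : 0 < x) :
    HasDerivAt (G' γ Γ)
      (2 * Γ * (1 - Γ) * x ^ (-3 : ℝ)
        - γ / 4 * ((γ - 1) * x ^ (γ - 2) + (γ + 1) * x ^ (-γ - 2))) x := by
  refine (((hasDerivAt_const x 1).sub (hasDerivAt_rpow_of_pos (-2) hx)).const_mul _ |>.sub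
    (((hasDerivAt_rpow_of_pos (γ - 1) hx).sub
      (hasDerivAt_rpow_of_pos (-γ - 1) hx)).const_mul _)).congr_deriv ?_
  rw [show (-2 : ℝ) - 1 = -3 by norm_num, show γ - 1 - 1 = γ - 2 by ring,
    show -γ - 1 - 1 = -γ - 2 by ring]
  ring

lemma deriv_deriv_G (hx : 0 < x) : deriv (deriv (G γ Γ)) x = -x ^ (-3 : ℝ) * F γ Γ x := by
  have hderiv : deriv (G γ Γ) =ᶠ[𝓝 x] G' γ Γ := by
    filter_upwards [Ioi_mem_nhds hx] with y hy using (hasDerivAt_G hy).deriv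
  have hplus : x ^ (γ - 2) = x ^ (-3 : ℝ) * x ^ (γ + 1) := by
    rw [← Real.rpow_add hx]; ring_nf
  have hminus : x ^ (-γ - 2) = x ^ (-3 : ℝ) * x ^ (1 - γ) := by
    rw [← Real.rpow_add hx]; ring_nf
  rw [hderiv.deriv_eq, (hasDerivAt_G' hx).deriv, hplus, hminus, F]
  ring

lemma hasDerivAt_F (hx : 0 < x) :
    HasDerivAt (F γ Γ) (γ / 4 * (γ ^ 2 - 1) * (x ^ γ - x ^ (-γ))) x := by
  refine ((((hasDerivAt_rpow_of_pos (γ + 1) hx).const_mul (γ - 1)).add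
    ((hasDerivAt_rpow_of_pos (1 - γ) hx).const_mul (γ + 1))).const_mul (γ / 4)
    |>.sub_const _).congr_deriv ?_
  rw [show γ + 1 - 1 = γ by ring, show 1 - γ - 1 = -γ by ring]
  ring

lemma mul_rpow_sub_rpow_neg_nonpos (hx₀ : 0 < x) (hx₁ : x ≤ 1) (γ : ℝ) :
    γ * (x ^ γ - x ^ (-γ)) ≤ 0 := by
  rcases le_total 0 γ with hγ | hγ
  · exact mul_nonpos_of_nonneg_of_nonpos hγ
      (sub_nonpos.2 (Real.rpow_le_rpow_of_exponent_ge hx₀ hx₁ (by linarith)))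
  · exact mul_nonpos_of_nonpos_of_nonneg hγ
      (sub_nonneg.2 (Real.rpow_le_rpow_of_exponent_ge hx₀ hx₁ (by linarith)))

lemma monotoneOn_F (hγ : |γ| ≤ 1) : MonotoneOn (F γ Γ) (Ioc 0 1) := by
  refine monotoneOn_of_hasDerivWithinAt_nonneg (convex_Ioc 0 1)
    (fun y hy => (hasDerivAt_F hy.1).continuousAt.continuousWithinAt)
    (fun y hy => (hasDerivAt_F (interior_subset hy).1).hasDerivWithinAt) fun y hy => ?_
  obtain ⟨hy₀, hy₁⟩ := interior_subset hy
  have hγsq : γ ^ 2 - 1 ≤ 0 := sub_nonpos.2 ((sq_le_one_iff_abs_le_one γ).2 hγ)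
  calc (0 : ℝ) ≤ (γ ^ 2 - 1) / 4 * (γ * (y ^ γ - y ^ (-γ))) :=
        mul_nonneg_of_nonpos_of_nonpos (by linarith) (mul_rpow_sub_rpow_neg_nonpos hy₀ hy₁ γ)
    _ = γ / 4 * (γ ^ 2 - 1) * (y ^ γ - y ^ (-γ)) := by ring

end Ggamma

/-- for `|γ| < 1` and `Γ ∈ ℝ`, with
`G_γ(w) = Γ(1-Γ)(w - 2 + w⁻¹) - (1/4)(w^γ - 2 + w^{-γ})` and
`F_γ(w) = (γ/4)((γ-1)w^{γ+1} + (γ+1)w^{1-γ}) - 2Γ(1-Γ)`, one has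
`G_γ''(w) = -w^{-3} F_γ(w)` for all `w > 0`, and `F_γ(w) ≤ F_γ(1)` for `0 < w ≤ 1`. -/
theorem Ggamma_second_deriv (γ Γ : ℝ) (hγ : |γ| < 1) (G F : ℝ → ℝ)
    (hG : G = fun w => Γ * (1 - Γ) * (w - 2 + w⁻¹) - (1 / 4) * (w ^ γ - 2 + w ^ (-γ)))
    (hF : F = fun w => (γ / 4) * ((γ - 1) * w ^ (γ + 1) + (γ + 1) * w ^ (1 - γ))
      - 2 * Γ * (1 - Γ)) :
    (∀ w : ℝ, 0 < w → deriv (deriv G) w = -w ^ (-3 : ℝ) * F w) ∧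
    (∀ w : ℝ, 0 < w → w ≤ 1 → F w ≤ F 1) := by
  subst hG hF
  exact ⟨fun w hw => Ggamma.deriv_deriv_G hw,
    fun w hw hw₁ => Ggamma.monotoneOn_F hγ.le ⟨hw, hw₁⟩ ⟨one_pos, le_rfl⟩ hw₁⟩
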